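/- arXiv:2404.02122 — 5 statements merged into one kernel-verified Lean document; each statement's English description precedes it below -/
import Mathlib

section
/- Let n = 2ν+1 be an odd integer with n ≥ 3. Then there exists a symmetric voltage assignment on a base graph with ν vertices over the group ℤ_n whose lift is isomorphic to the Johnson graph J(n,2). Precisely: there exists a function N : Fin ν × Fin ν → Multiset (ZMod n) satisfying N(v,u) = (N(u,v)).map(λ t, −t) for all u, v, and such that 0 ∉ N(u,u) for all u, for which the lift graph — the simple graph on vertex set Fin ν × ZMod n in which (u,g) is adjacent to (v,h) if and only if h − g ∈ N(u,v) — is isomorphic to J(n,2). -/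
/-- The Johnson graph `J(n,k)`: vertices are the `k`-element subsets of `ZMod n`,
two subsets being adjacent iff their intersection has exactly `k-1` elements. -/
def johnsonGraph (n k : ℕ) : SimpleGraph {A : Finset (ZMod n) // A.card = k} where
  Adj A B := ((A : Finset (ZMod n)) ∩ (B : Finset (ZMod n))).card + 1 = k
  symm := ⟨fun A B h => by rwa [Finset.inter_comm]⟩
  loopless := ⟨fun A h => by
    rw [Finset.inter_self, A.2] at h
    omega⟩

/-!
Write `n = 2ν + 1` and `d u = u + 1` for `u < ν`. Since `n` is odd, every nonzero residue is
`d u` or `-d u` for exactly one `u`, so `(u, g) ↦ {g, g + d u}` is a bijection onto the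
2-subsets of `ℤ_n`. Two 2-subsets are adjacent in `J(n,2)` iff they are distinct and meet, and
`{g, g + a}` meets `{h, h + b}` iff `h - g ∈ {0, a, -b, a - b}`; for `a = b` the values `0` and
`a - b` give back the same 2-subset and have to be dropped. This multiset of differences is the
voltage assignment.
-/

namespace Finset

variable {α : Type*} [DecidableEq α]

theorem card_inter_add_one_eq_two_iff {A B : Finset α} (hA : #A = 2) (hB : #B = 2) :
    #(A ∩ B) + 1 = 2 ↔ (A ∩ B).Nonempty ∧ A ≠ B := by
  have hle : #(A ∩ B) ≤ 2 := hA ▸ card_le_card inter_subset_left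
  have htwo : #(A ∩ B) = 2 ↔ A = B := by
    refine ⟨fun h => ?_, by rintro rfl; simpa⟩
    exact (eq_of_subset_of_card_le inter_subset_left (by omega)).symm.trans
      (eq_of_subset_of_card_le inter_subset_right (by omega))
  rw [← card_pos, Ne, ← htwo]
  omega

end Finset

theorem ZMod.exists_natCast_eq_or_eq_neg {n : ℕ} [NeZero n] {x : ZMod n} (hx : x ≠ 0) :
    ∃ m : ℕ, 0 < m ∧ m ≤ n / 2 ∧ ((m : ZMod n) = x ∨ (m : ZMod n) = -x) := by
  refine ⟨x.valMinAbs.natAbs, ?_, x.natAbs_valMinAbs_le, ?_⟩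
  · rwa [Int.natAbs_pos, Ne, ZMod.valMinAbs_eq_zero]
  · have hx' := x.coe_valMinAbs
    rcases Int.natAbs_eq x.valMinAbs with h | h <;> rw [h] at hx'
    · exact .inl ((Int.cast_natCast _).symm.trans hx')
    · rw [Int.cast_neg, Int.cast_natCast] at hx'
      exact .inr (neg_eq_iff_eq_neg.mp hx')

section HalfSystem

variable {ι G : Type*} [AddCommGroup G] (d : ι → G)

def pairVoltage [DecidableEq ι] (p : ι × ι) : Multiset G :=
  if p.1 = p.2 then {d p.1, -d p.1} else {0, d p.1, -d p.2, d p.1 - d p.2}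

theorem pairVoltage_swap [DecidableEq ι] (u v : ι) :
    pairVoltage d (v, u) = (pairVoltage d (u, v)).map (fun t => -t) := by
  by_cases huv : u = v
  · subst huv
    simp only [pairVoltage, ↓reduceIte, Multiset.insert_eq_cons, Multiset.map_cons,
      Multiset.map_singleton, neg_neg]
    exact Multiset.cons_swap _ _ _
  · simp only [pairVoltage, if_neg huv, if_neg (Ne.symm huv), Multiset.insert_eq_cons,
      Multiset.map_cons, Multiset.map_singleton, neg_zero, neg_neg, neg_sub]
    exact congrArg (Multiset.cons 0) (Multiset.cons_swap _ _ _)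

theorem zero_notMem_pairVoltage [DecidableEq ι] (hd : ∀ u, d u ≠ 0) (u : ι) :
    (0 : G) ∉ pairVoltage d (u, u) := by
  simp [pairVoltage, eq_comm, hd u]

structure IsHalfSystem : Prop where
  injective : Function.Injective d
  ne_zero : ∀ u, d u ≠ 0
  add_ne_zero : ∀ u v, d u + d v ≠ 0
  exists_eq_or_eq_neg : ∀ x : G, x ≠ 0 → ∃ u, d u = x ∨ d u = -x

variable [DecidableEq G]

def pairOf (p : ι × G) : Finset G := {p.2, p.2 + d p.1}

theorem card_pairOf (hd : ∀ u, d u ≠ 0) (p : ι × G) : (pairOf d p).card = 2 :=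
  Finset.card_pair fun h => hd p.1 (left_eq_add.mp h)

theorem pair_inter_pair_nonempty_iff (g h a b : G) :
    ({g, g + a} ∩ {h, h + b} : Finset G).Nonempty ↔
      h - g ∈ ({0, a, -b, a - b} : Multiset G) := by
  simp only [Finset.Nonempty, Finset.mem_inter, Finset.mem_insert, Finset.mem_singleton,
    Multiset.insert_eq_cons, Multiset.mem_cons, Multiset.mem_singleton]
  constructor
  · rintro ⟨x, hx | hx, hx' | hx'⟩ <;> subst hx <;> grind
  · rintro (h0 | h0 | h0 | h0)
    · exact ⟨g, .inl rfl, .inl (by grind)⟩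
    · exact ⟨h, .inr (by grind), .inl rfl⟩
    · exact ⟨g, .inl rfl, .inr (by grind)⟩
    · exact ⟨g + a, .inr rfl, .inr (by grind)⟩

namespace IsHalfSystem

variable {d}

theorem pairOf_injective (hd : IsHalfSystem d) : Function.Injective (pairOf d) := by
  rintro ⟨u, g⟩ ⟨v, h⟩ heq
  have hg : g ∈ pairOf d (v, h) := heq ▸ Finset.mem_insert_self _ _
  have hh : h ∈ pairOf d (u, g) := heq ▸ Finset.mem_insert_self _ _
  have hgu : g + d u ∈ pairOf d (v, h) :=
    heq ▸ Finset.mem_insert_of_mem (Finset.mem_singleton_self _)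
  simp only [pairOf, Finset.mem_insert, Finset.mem_singleton] at hg hh hgu
  have hu := hd.ne_zero u
  have hv := hd.ne_zero v
  have huv := hd.add_ne_zero u v
  rcases hg with rfl | rfl
  · rcases hgu with hgu | hgu
    · grind
    · rw [hd.injective (add_left_cancel hgu)]
  · grind

theorem exists_pairOf_eq (hd : IsHalfSystem d) {A : Finset G} (hA : A.card = 2) :
    ∃ p, pairOf d p = A := by
  obtain ⟨a, b, hab, rfl⟩ := Finset.card_eq_two.mp hA
  obtain ⟨u, hu | hu⟩ := hd.exists_eq_or_eq_neg (b - a) (sub_ne_zero.mpr hab.symm)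
  · exact ⟨(u, a), by simp [pairOf, hu]⟩
  · exact ⟨(u, b), by simp [pairOf, hu, Finset.pair_comm]⟩

noncomputable def pairEquiv (hd : IsHalfSystem d) : ι × G ≃ {A : Finset G // A.card = 2} :=
  Equiv.ofBijective (fun p => ⟨pairOf d p, card_pairOf d hd.ne_zero p⟩)
    ⟨fun _ _ h => hd.pairOf_injective (congrArg Subtype.val h),
      fun A => (hd.exists_pairOf_eq A.2).imp fun _ h => Subtype.ext h⟩

theorem card_inter_pairOf_add_one_eq_two_iff [DecidableEq ι] (hd : IsHalfSystem d)
    (p q : ι × G) :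
    (pairOf d p ∩ pairOf d q).card + 1 = 2 ↔ q.2 - p.2 ∈ pairVoltage d (p.1, q.1) := by
  rw [Finset.card_inter_add_one_eq_two_iff (card_pairOf d hd.ne_zero p)
    (card_pairOf d hd.ne_zero q), hd.pairOf_injective.ne_iff, pairOf, pairOf,
    pair_inter_pair_nonempty_iff]
  obtain ⟨u, g⟩ := p
  obtain ⟨v, h⟩ := q
  by_cases huv : u = v
  · subst huv
    have hu := hd.ne_zero u
    simp only [pairVoltage, ↓reduceIte, sub_self, Multiset.insert_eq_cons, Multiset.mem_cons,
      Multiset.mem_singleton, ne_eq, Prod.mk.injEq, true_and]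
    grind
  · simp [pairVoltage, huv]

end IsHalfSystem

end HalfSystem

theorem isHalfSystem_natCast_succ (ν : ℕ) :
    IsHalfSystem fun u : Fin ν => (((u : ℕ) + 1 : ℕ) : ZMod (2 * ν + 1)) := by
  have hval (u : Fin ν) : ((((u : ℕ) + 1 : ℕ) : ZMod (2 * ν + 1))).val = u + 1 :=
    ZMod.val_natCast_of_lt (by omega)
  refine ⟨fun u v h => Fin.ext ?_, fun u h => ?_, fun u v h => ?_, fun x hx => ?_⟩
  · have := congrArg ZMod.val h
    rw [hval, hval] at this
    omega
  · have := hval u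
    rw [h, ZMod.val_zero] at this
    omega
  · have hsum : ((((u : ℕ) + 1 : ℕ) : ZMod (2 * ν + 1)) + (((v : ℕ) + 1 : ℕ))).val =
        u + 1 + (v + 1) := by
      rw [ZMod.val_add_of_lt (by rw [hval, hval]; omega), hval, hval]
    rw [h, ZMod.val_zero] at hsum
    omega
  · obtain ⟨m, hm0, hmν, hm⟩ := ZMod.exists_natCast_eq_or_eq_neg hx
    refine ⟨⟨m - 1, by omega⟩, ?_⟩
    rwa [Nat.sub_add_cancel hm0]

theorem stmt_1_general (ν : ℕ) :
    ∃ N : Fin ν × Fin ν → Multiset (ZMod (2 * ν + 1)),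
      (∀ u v : Fin ν, N (v, u) = (N (u, v)).map (fun t => -t)) ∧
      (∀ u : Fin ν, (0 : ZMod (2 * ν + 1)) ∉ N (u, u)) ∧
      ∃ lift : SimpleGraph (Fin ν × ZMod (2 * ν + 1)),
        (∀ p q : Fin ν × ZMod (2 * ν + 1),
          lift.Adj p q ↔ q.2 - p.2 ∈ N (p.1, q.1)) ∧
        Nonempty (lift ≃g johnsonGraph (2 * ν + 1) 2) := by
  have hd := isHalfSystem_natCast_succ ν
  refine ⟨pairVoltage _, pairVoltage_swap _, zero_notMem_pairVoltage _ hd.ne_zero,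
    (johnsonGraph _ 2).comap hd.pairEquiv, fun p q => ?_, ⟨.comap _ _⟩⟩
  exact (johnsonGraph _ 2).comap_adj.trans (hd.card_inter_pairOf_add_one_eq_two_iff p q)

theorem stmt_1 (ν : ℕ) (hν : 1 ≤ ν) :
    ∃ N : Fin ν × Fin ν → Multiset (ZMod (2 * ν + 1)),
      (∀ u v : Fin ν, N (v, u) = (N (u, v)).map (fun t => -t)) ∧
      (∀ u : Fin ν, (0 : ZMod (2 * ν + 1)) ∉ N (u, u)) ∧
      ∃ lift : SimpleGraph (Fin ν × ZMod (2 * ν + 1)),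
        (∀ p q : Fin ν × ZMod (2 * ν + 1),
          lift.Adj p q ↔ q.2 - p.2 ∈ N (p.1, q.1)) ∧
        Nonempty (lift ≃g johnsonGraph (2 * ν + 1) 2) :=
  stmt_1_general ν
end

section
/- Let n and k be integers with 1 ≤ k ≤ n−1 and gcd(n,k) = 1. Then the translation action of ℤ_n on the collection of k-element subsets of ℤ_n (given by (S, g) ↦ S + g) is free — every orbit has exactly n elements — and the number of orbits equals C(n,k)/n, where C(n,k) is the binomial coefficient. -/
theorem stmt_5 (n k : ℕ) (hk1 : 1 ≤ k) (hk2 : k ≤ n - 1) (hgcd : Nat.gcd n k = 1) :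
    -- the translation action on k-element subsets of ZMod n is free
    (∀ (S : Finset (ZMod n)), S.card = k → ∀ g : ZMod n, S.image (· + g) = S → g = 0) ∧
    -- every orbit has exactly n elements
    (∀ S : {A : Finset (ZMod n) // A.card = k},
      Nat.card {T : {A : Finset (ZMod n) // A.card = k} //
        ∃ g : ZMod n, (S : Finset (ZMod n)).image (· + g) = (T : Finset (ZMod n))} = n) ∧
    -- the number of orbits equals C(n,k)/n
    Nat.card (Quot fun S T : {A : Finset (ZMod n) // A.card = k} =>
      ∃ g : ZMod n, (S : Finset (ZMod n)).image (· + g) = (T : Finset (ZMod n))) =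
      n.choose k / n := by
  have hn : 2 ≤ n := by omega
  haveI : NeZero n := ⟨by omega⟩
  -- composition of shifts
  have himg : ∀ (S : Finset (ZMod n)) (g h : ZMod n),
      (S.image (· + g)).image (· + h) = S.image (· + (g + h)) := by
    intro S g h
    rw [Finset.image_image]
    congr 1
    ext x
    simp [add_assoc]
  have himg0 : ∀ S : Finset (ZMod n), S.image (· + (0 : ZMod n)) = S := by
    intro S; simp
  -- freeness
  have key : ∀ (S : Finset (ZMod n)), S.card = k → ∀ g : ZMod n,
      S.image (· + g) = S → g = 0 := by
    intro S hS g hg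
    have hinj : Function.Injective (fun x : ZMod n => x + g) :=
      add_left_injective g
    have hsum : ∑ x ∈ S.image (· + g), x = ∑ x ∈ S, x := by rw [hg]
    rw [Finset.sum_image (fun x _ y _ h => hinj h)] at hsum
    rw [Finset.sum_add_distrib, Finset.sum_const, hS] at hsum
    have hk0 : k • g = 0 := add_eq_left.mp hsum
    have hkg : (k : ZMod n) * g = 0 := by
      rw [← hk0]; simp [nsmul_eq_mul]
    have hu : IsUnit (k : ZMod n) := by
      rw [ZMod.isUnit_iff_coprime]
      exact Nat.coprime_comm.mp hgcd
    exact (hu.mul_right_eq_zero).mp hkg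
  -- shift map on the subtype
  have cardimg : ∀ (S : {A : Finset (ZMod n) // A.card = k}) (g : ZMod n),
      ((S : Finset (ZMod n)).image (· + g)).card = k := by
    intro S g
    rw [Finset.card_image_of_injective _ (add_left_injective g)]
    exact S.2
  -- orbit map is bijective
  have orbitEquiv : ∀ S : {A : Finset (ZMod n) // A.card = k},
      ZMod n ≃ {T : {A : Finset (ZMod n) // A.card = k} //
        ∃ g : ZMod n, (S : Finset (ZMod n)).image (· + g) = (T : Finset (ZMod n))} := by
    intro S
    refine Equiv.ofBijective
      (fun g => ⟨⟨(S : Finset (ZMod n)).image (· + g), cardimg S g⟩, g, rfl⟩) ⟨?_, ?_⟩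
    · intro g g' h
      have h2 : (S : Finset (ZMod n)).image (· + g) =
          (S : Finset (ZMod n)).image (· + g') := by
        simpa [Subtype.ext_iff] using h
      have h3 : (S : Finset (ZMod n)).image (· + (g + -g')) = (S : Finset (ZMod n)) := by
        rw [← himg, h2, himg, add_neg_cancel, himg0]
      have := key _ S.2 _ h3
      have : g = g' := by
        have h4 : g + -g' = 0 := this
        linear_combination (norm := abel) h4
      exact this
    · rintro ⟨⟨T, hT⟩, g, hg⟩
      exact ⟨g, by simp [Subtype.ext_iff, hg]⟩
  refine ⟨key, fun S => ?_, ?_⟩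
  · rw [← Nat.card_congr (orbitEquiv S), Nat.card_zmod]
  -- counting orbits
  · set r : {A : Finset (ZMod n) // A.card = k} → {A : Finset (ZMod n) // A.card = k} → Prop :=
      fun S T => ∃ g : ZMod n, (S : Finset (ZMod n)).image (· + g) = (T : Finset (ZMod n))
      with hr
    have hequiv : Equivalence r := by
      constructor
      · intro S; exact ⟨0, himg0 _⟩
      · rintro S T ⟨g, hg⟩
        exact ⟨-g, by rw [← hg, himg, add_neg_cancel, himg0]⟩
      · rintro S T U ⟨g, hg⟩ ⟨h, hh⟩
        exact ⟨g + h, by rw [← himg, hg, hh]⟩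
    have hmk : ∀ S T, Quot.mk r S = Quot.mk r T ↔ r S T := by
      intro S T
      constructor
      · intro h
        exact hequiv.eqvGen_iff.mp (Quot.eqvGen_exact h)
      · exact Quot.sound
    haveI : Fintype (Quot r) := Fintype.ofFinite _
    have htot : Nat.card {A : Finset (ZMod n) // A.card = k} = n.choose k := by
      rw [Nat.card_eq_fintype_card, Fintype.card_finset_len, ZMod.card]
    have hsig : Nat.card {A : Finset (ZMod n) // A.card = k} = Nat.card (Quot r) * n := by
      rw [← Nat.card_congr (Equiv.sigmaFiberEquiv (Quot.mk r))]
      haveI : ∀ q : Quot r, Fintype {x // Quot.mk r x = q} := fun q => Fintype.ofFinite _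
      rw [Nat.card_eq_fintype_card, Fintype.card_sigma]
      have hfib : ∀ q : Quot r, Nat.card {x // Quot.mk r x = q} = n := by
        intro q
        obtain ⟨S, rfl⟩ := Quot.exists_rep q
        have e : {x // Quot.mk r x = Quot.mk r S} ≃
            {T : {A : Finset (ZMod n) // A.card = k} //
              ∃ g : ZMod n, (S : Finset (ZMod n)).image (· + g) = (T : Finset (ZMod n))} := by
          apply Equiv.subtypeEquivRight
          intro x
          rw [hmk]
          constructor
          · exact hequiv.symm
          · exact hequiv.symm
        rw [Nat.card_congr e, ← Nat.card_congr (orbitEquiv S), Nat.card_zmod]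
      have : ∀ q : Quot r, Fintype.card {x // Quot.mk r x = q} = n := fun q => by
        rw [← Nat.card_eq_fintype_card]; exact hfib q
      simp only [this, Finset.sum_const, Finset.card_univ, smul_eq_mul,
        Nat.card_eq_fintype_card]
    have : n.choose k = Nat.card (Quot r) * n := by rw [← htot, hsig]
    rw [this, Nat.mul_div_cancel _ (by omega)]
end

section
/- Let Γ be a finite group of order n, let S ⊆ Γ satisfy S = S⁻¹ and 1 ∉ S, let G = Cay(Γ, S), and let 1 ≤ k ≤ n−1. Suppose Γ has a k-set decomposition, i.e. the right translation action of Γ on k-element subsets of Γ (given by (A, g) ↦ Ag = {a g : a ∈ A}) is free. Then Γ acts freely by graph automorphisms on the k-token graph F_k(G) via right translation, and this action has exactly C(n,k)/n orbits on the vertex set of F_k(G) (so F_k(G) is a lift by the group Γ of a base graph with C(n,k)/n vertices). -/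
open scoped symmDiff

/-- The `k`-token graph of a simple graph `G`: vertices are the `k`-element subsets of the
vertex set, two subsets being adjacent iff their symmetric difference is `{u, v}` for some
edge `{u, v}` of `G`. -/
def tokenGraph {V : Type*} [DecidableEq V] (G : SimpleGraph V) (k : ℕ) :
    SimpleGraph {A : Finset V // A.card = k} where
  Adj A B := ∃ u v : V, G.Adj u v ∧
    (A : Finset V) ∆ (B : Finset V) = {u, v}
  symm := ⟨fun A B h => by
    obtain ⟨u, v, huv, h⟩ := h
    exact ⟨u, v, huv, by rwa [symmDiff_comm]⟩⟩
  loopless := ⟨fun A h => by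
    obtain ⟨u, v, huv, h⟩ := h
    rw [symmDiff_self] at h
    exact (Finset.insert_ne_empty u {v}) h.symm⟩

/-!
Right translation by `g` is an automorphism of the Cayley graph, since
`(v * g) * (u * g)⁻¹ = v * u⁻¹`, and every graph isomorphism induces one of the token graphs
by mapping token sets. Right translation is the pointwise action of `Γᵐᵒᵖ` on `k`-subsets; a
`k`-set decomposition makes it free, so the `k`-subsets are in bijection with
(orbits) × `Γ`, and there are `C(n, k) / n` orbits.
-/

namespace SimpleGraph.Iso

variable {V W : Type*} [DecidableEq V] [DecidableEq W] {G : SimpleGraph V} {H : SimpleGraph W}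

theorem image_symmDiff_eq_pair_iff (φ : G ≃g H) (A B : Finset V) (u v : V) :
    A.image φ ∆ B.image φ = {φ u, φ v} ↔ A ∆ B = {u, v} := by
  rw [← Finset.image_symmDiff _ _ φ.injective,
    show ({φ u, φ v} : Finset W) = ({u, v} : Finset V).image φ by simp,
    (Finset.image_injective φ.injective).eq_iff]

def tokenGraph (φ : G ≃g H) (k : ℕ) : _root_.tokenGraph G k ≃g _root_.tokenGraph H k where
  toEquiv := φ.toEquiv.finsetCongr.subtypeEquiv fun A => by simp
  map_rel_iff' := by
    simp only [_root_.tokenGraph, Equiv.subtypeEquiv_apply, Equiv.finsetCongr_apply,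
      Finset.map_eq_image, φ.surjective.exists, φ.map_adj_iff]
    exact exists₂_congr fun u v => and_congr_right' (φ.image_symmDiff_eq_pair_iff _ _ u v)

@[simp]
theorem coe_tokenGraph_apply (φ : G ≃g H) (k : ℕ) (A : {A : Finset V // A.card = k}) :
    ((φ.tokenGraph k A : {B : Finset W // B.card = k}) : Finset W) = (A : Finset V).image φ :=
  Finset.map_eq_image _ _

end SimpleGraph.Iso

def cayleyMulRight {Γ : Type*} [Group Γ] {S : Set Γ} {G : SimpleGraph Γ}
    (hG : ∀ u v : Γ, G.Adj u v ↔ v * u⁻¹ ∈ S) (g : Γ) : G ≃g G where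
  toEquiv := Equiv.mulRight g
  map_rel_iff' := by simp [hG, mul_assoc]

open scoped Pointwise in
instance Finset.mulActionSubtypeCardEq {G α : Type*} [Group G] [MulAction G α] [DecidableEq α]
    (k : ℕ) : MulAction G {s : Finset α // s.card = k} where
  smul g s := ⟨g • (s : Finset α), (card_smul_finset g _).trans s.2⟩
  one_smul s := Subtype.ext (one_smul G (s : Finset α))
  mul_smul g h s := Subtype.ext (mul_smul g h (s : Finset α))

theorem MulAction.card_eq_card_orbits_mul_card_group {G X : Type*} [Group G] [MulAction G X]
    (h : ∀ x : X, stabilizer G x = ⊥) :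
    Nat.card X = Nat.card (orbitRel.Quotient G X) * Nat.card G := by
  rw [Nat.card_congr (selfEquivOrbitsQuotientProd h), Nat.card_prod]

theorem stmt_8_general {Γ : Type*} [Group Γ] [Fintype Γ] [DecidableEq Γ]
    (S : Set Γ)
    (G : SimpleGraph Γ) (hG : ∀ u v : Γ, G.Adj u v ↔ v * u⁻¹ ∈ S)
    (k : ℕ)
    -- Γ has a k-set decomposition: the right translation action on k-subsets is free
    (hfree : ∀ (A : Finset Γ), A.card = k → ∀ g : Γ, A.image (· * g) = A → g = 1) :
    -- Γ acts by graph automorphisms on the k-token graph via right translation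
    (∀ g : Γ, ∃ φ : tokenGraph G k ≃g tokenGraph G k,
      ∀ A : {A : Finset Γ // A.card = k},
        ((φ A : {A : Finset Γ // A.card = k}) : Finset Γ) = (A : Finset Γ).image (· * g)) ∧
    -- this action is free on the vertex set of the token graph
    (∀ (A : {A : Finset Γ // A.card = k}) (g : Γ),
      (A : Finset Γ).image (· * g) = (A : Finset Γ) → g = 1) ∧
    -- and it has exactly C(n,k)/n orbits on the vertex set
    Nat.card (Quot fun A B : {A : Finset Γ // A.card = k} =>
      ∃ g : Γ, (A : Finset Γ).image (· * g) = (B : Finset Γ)) =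
      (Fintype.card Γ).choose k / Fintype.card Γ := by
  refine ⟨fun g => ⟨(cayleyMulRight hG g).tokenGraph k,
    (cayleyMulRight hG g).coe_tokenGraph_apply k⟩, fun A => hfree A A.2, ?_⟩
  have hstab (A : {A : Finset Γ // A.card = k}) : MulAction.stabilizer Γᵐᵒᵖ A = ⊥ :=
    (Subgroup.eq_bot_iff_forall _).2 fun g hg =>
      MulOpposite.unop_injective (hfree A A.2 g.unop (congrArg Subtype.val hg))
  have horbitRel : (fun A B : {A : Finset Γ // A.card = k} =>
      ∃ g : Γ, (A : Finset Γ).image (· * g) = (B : Finset Γ)) =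
        (MulAction.orbitRel Γᵐᵒᵖ _).r := by
    ext A B
    rw [Setoid.comm', MulAction.orbitRel_apply, MulAction.mem_orbit_iff,
      MulOpposite.op_surjective.exists]
    exact exists_congr fun g => by rw [Subtype.ext_iff]; rfl
  have hcard : (Fintype.card Γ).choose k =
      Nat.card (MulAction.orbitRel.Quotient Γᵐᵒᵖ {A : Finset Γ // A.card = k}) *
        Fintype.card Γ := by
    rw [← Fintype.card_finset_len, ← Nat.card_eq_fintype_card, ← Nat.card_eq_fintype_card,
      Nat.card_congr (MulOpposite.opEquiv (α := Γ))]
    exact MulAction.card_eq_card_orbits_mul_card_group hstab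
  rw [horbitRel, hcard, Nat.mul_div_cancel _ Fintype.card_pos]
  rfl

theorem stmt_8 {Γ : Type*} [Group Γ] [Fintype Γ] [DecidableEq Γ]
    (S : Set Γ) (hSinv : S⁻¹ = S) (hS1 : (1 : Γ) ∉ S)
    (G : SimpleGraph Γ) (hG : ∀ u v : Γ, G.Adj u v ↔ v * u⁻¹ ∈ S)
    (k : ℕ) (hk1 : 1 ≤ k) (hk2 : k ≤ Fintype.card Γ - 1)
    -- Γ has a k-set decomposition: the right translation action on k-subsets is free
    (hfree : ∀ (A : Finset Γ), A.card = k → ∀ g : Γ, A.image (· * g) = A → g = 1) :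
    -- Γ acts by graph automorphisms on the k-token graph via right translation
    (∀ g : Γ, ∃ φ : tokenGraph G k ≃g tokenGraph G k,
      ∀ A : {A : Finset Γ // A.card = k},
        ((φ A : {A : Finset Γ // A.card = k}) : Finset Γ) = (A : Finset Γ).image (· * g)) ∧
    -- this action is free on the vertex set of the token graph
    (∀ (A : {A : Finset Γ // A.card = k}) (g : Γ),
      (A : Finset Γ).image (· * g) = (A : Finset Γ) → g = 1) ∧
    -- and it has exactly C(n,k)/n orbits on the vertex set
    Nat.card (Quot fun A B : {A : Finset Γ // A.card = k} =>
      ∃ g : Γ, (A : Finset Γ).image (· * g) = (B : Finset Γ)) =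
      (Fintype.card Γ).choose k / Fintype.card Γ :=
  stmt_8_general S G hG k hfree
end

section
/- Let Γ be a finite additive abelian group, V a finite set, and N : V × V → Multiset Γ a voltage assignment satisfying N(v,u) = (N(u,v)).map(λ t, −t) for all u, v ∈ V. Let A be the adjacency matrix of the lift: the matrix indexed by V × Γ with A_{(u,g),(v,h)} equal to the multiplicity of h − g in the multiset N(u,v). For an additive character χ : Γ → ℂ (a homomorphism from Γ to the multiplicative monoid of ℂ with χ(0)=1), let B(χ) be the V × V complex matrix with B(χ)_{uv} = Σ_{t ∈ N(u,v)} χ(t). If x = (x_u)_{u∈V} is a vector with B(χ) x = λ x for some λ ∈ ℂ, then the vector φ indexed by V × Γ with components φ_{(u,g)} = χ(g) · x_u satisfies A φ = λ φ. In particular, every eigenvector of B(χ) lifts to an eigenvector of the lift graph with the same eigenvalue. -/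
theorem stmt_11 {Γ V : Type*} [AddCommGroup Γ] [Fintype Γ] [DecidableEq Γ] [Fintype V]
    (N : V × V → Multiset Γ)
    (hsym : ∀ u v : V, N (v, u) = (N (u, v)).map (fun t => -t))
    -- A : adjacency matrix of the lift
    (A : Matrix (V × Γ) (V × Γ) ℂ)
    (hA : ∀ p q : V × Γ, A p q = ((N (p.1, q.1)).count (q.2 - p.2) : ℕ))
    -- B(χ) : the polynomial matrix evaluated at the character χ
    (χ : AddChar Γ ℂ) (B : Matrix V V ℂ)
    (hB : ∀ u v : V, B u v = ((N (u, v)).map (fun t => χ t)).sum)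
    (lam : ℂ) (x : V → ℂ) (hx : B.mulVec x = lam • x) :
    A.mulVec (fun p : V × Γ => χ p.2 * x p.1) = lam • (fun p : V × Γ => χ p.2 * x p.1) := by
  have sumcount : ∀ (s : Multiset Γ), ∑ t : Γ, (s.count t : ℂ) * χ t = (s.map fun t => χ t).sum := by
    intro s
    rw [Finset.sum_multiset_map_count]
    rw [← Finset.sum_subset (Finset.subset_univ s.toFinset)]
    · refine Finset.sum_congr rfl fun t _ => ?_
      simp [nsmul_eq_mul]
    · intro t _ ht
      simp [Multiset.count_eq_zero_of_notMem (by simpa using ht)]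
  funext p
  obtain ⟨u, g⟩ := p
  have hBx := congrFun hx u
  simp only [Matrix.mulVec, dotProduct, Pi.smul_apply, smul_eq_mul] at hBx ⊢
  rw [Fintype.sum_prod_type]
  have step : ∀ v : V, ∑ h : Γ, A (u, g) (v, h) * (χ h * x v) = χ g * (B u v * x v) := by
    intro v
    have := sumcount (N (u, v))
    calc ∑ h : Γ, A (u, g) (v, h) * (χ h * x v)
        = (∑ h : Γ, ((N (u, v)).count (h - g) : ℂ) * χ h) * x v := by
          rw [Finset.sum_mul]
          refine Finset.sum_congr rfl fun h _ => ?_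
          rw [hA]; ring
      _ = (∑ t : Γ, ((N (u, v)).count t : ℂ) * χ (t + g)) * x v := by
          rw [← Fintype.sum_equiv (Equiv.addRight g)
            (fun t => ((N (u, v)).count t : ℂ) * χ (t + g))
            (fun h => ((N (u, v)).count (h - g) : ℂ) * χ h) (fun t => by simp)]
      _ = χ g * (B u v * x v) := by
          simp only [AddChar.map_add_eq_mul]
          rw [hB, ← sumcount]
          simp only [Finset.sum_mul, Finset.mul_sum]
          refine Finset.sum_congr rfl fun t _ => ?_
          ring
  rw [Fintype.sum_congr _ _ step, ← Finset.mul_sum, hBx]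
  ring
end

section
/- Let Γ be a finite additive abelian group, V a finite set, and N : V × V → Multiset Γ a voltage assignment satisfying N(v,u) = (N(u,v)).map(λ t, −t) for all u, v ∈ V. Let A be the adjacency matrix of the lift, indexed by V × Γ, with A_{(u,g),(v,h)} equal to the multiplicity of h − g in N(u,v), and for each additive character χ : Γ → ℂ let B(χ) be the V × V matrix with B(χ)_{uv} = Σ_{t ∈ N(u,v)} χ(t). Then the characteristic polynomial of A equals the product, over all additive characters χ of Γ with values in ℂ, of the characteristic polynomials of B(χ). Consequently, the spectrum of the lift is the multiset union of the spectra of the matrices B(χ) over all characters χ. -/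
/-!
Let `F` be the character table of `Γ`, `F g χ = χ g`; by orthogonality of characters it is
invertible, with inverse `χ, g ↦ χ (-g) / |Γ|`. The `(u, v)`-block of the lift is convolution by
the multiset `N (u, v)`, and each character `χ` is an eigenvector of that convolution with
eigenvalue `∑ t ∈ N (u, v), χ t`. Hence `1 ⊗ F` conjugates the lift into the block diagonal
matrix with blocks `B χ`, whose characteristic polynomial is the product of theirs. The roots of a
product of monic polynomials are the union of their roots.
-/

open Matrix Polynomial

theorem Multiset.sum_map_eq_sum_count_smul {α M : Type*} [Fintype α] [DecidableEq α]
    [AddCommMonoid M] (m : Multiset α) (f : α → M) :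
    (m.map f).sum = ∑ a, m.count a • f a := by
  rw [Finset.sum_multiset_map_count]
  exact Finset.sum_subset (Finset.subset_univ _) fun a _ ha => by
    rw [Multiset.count_eq_zero.mpr (by simpa using ha), zero_smul]

theorem Matrix.charmatrix_blockDiagonal {n o R : Type*} [Fintype n] [DecidableEq n]
    [Fintype o] [DecidableEq o] [CommRing R] (M : o → Matrix n n R) :
    charmatrix (blockDiagonal M) = blockDiagonal fun k => charmatrix (M k) := by
  simp only [charmatrix, RingHom.mapMatrix_apply, scalar_apply]
  change _ = blockDiagonal ((fun _ => diagonal fun _ => X) - fun k => (M k).map C)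
  rw [blockDiagonal_sub, blockDiagonal_diagonal, blockDiagonal_map _ _ (map_zero C)]

theorem Matrix.charpoly_blockDiagonal {n o R : Type*} [Fintype n] [DecidableEq n]
    [Fintype o] [DecidableEq o] [CommRing R] (M : o → Matrix n n R) :
    (blockDiagonal M).charpoly = ∏ k, (M k).charpoly := by
  rw [charpoly, charmatrix_blockDiagonal, det_blockDiagonal]
  rfl

theorem Matrix.charpoly_eq_of_mul_eq_mul {m n R : Type*} [Fintype m] [DecidableEq m]
    [Fintype n] [DecidableEq n] [CommRing R] [IsStablyFiniteRing R]
    (hcard : Fintype.card m = Fintype.card n) {P : Matrix m n R} {Q : Matrix n m R}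
    (hPQ : P * Q = 1)
    {A : Matrix m m R} {D : Matrix n n R} (h : A * P = P * D) :
    A.charpoly = D.charpoly := by
  have hQP : Q * P = 1 := (mul_eq_one_comm_of_card_eq m n R hcard).mp hPQ
  have hA : A = P * (D * Q) := by
    rw [← Matrix.mul_assoc, ← h, Matrix.mul_assoc, hPQ, Matrix.mul_one]
  have := charpoly_mul_comm' P (D * Q)
  rw [Matrix.mul_assoc, hQP, Matrix.mul_one, hcard, ← hA] at this
  exact (isRegular_X_pow _).left this

theorem Polynomial.roots_prod_of_monic {R ι : Type*} [CommRing R] [IsDomain R]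
    (s : Finset ι) (f : ι → R[X]) (hf : ∀ i ∈ s, (f i).Monic) :
    (∏ i ∈ s, f i).roots = ∑ i ∈ s, (f i).roots := by
  rw [roots_prod _ _ (monic_prod_of_monic _ _ hf).ne_zero]
  rfl

open scoped Kronecker

section Characters

def characterTable (Γ : Type*) [AddCommGroup Γ] : Matrix Γ (AddChar Γ ℂ) ℂ :=
  of fun g χ => χ g

noncomputable def characterTableInv (Γ : Type*) [AddCommGroup Γ] [Fintype Γ] :
    Matrix (AddChar Γ ℂ) Γ ℂ :=
  of fun χ g => (Fintype.card Γ : ℂ)⁻¹ * χ (-g)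

variable {Γ : Type*} [AddCommGroup Γ] [Fintype Γ]

theorem characterTable_mul_characterTableInv [DecidableEq Γ] :
    characterTable Γ * characterTableInv Γ = 1 := by
  ext g h
  have hcard : (Fintype.card Γ : ℂ) ≠ 0 := Nat.cast_ne_zero.mpr Fintype.card_ne_zero
  simp only [characterTable, characterTableInv, mul_apply, of_apply, mul_left_comm _ (_⁻¹ : ℂ),
    ← AddChar.map_add_eq_mul, ← Finset.mul_sum, ← sub_eq_add_neg, AddChar.sum_apply_eq_ite,
    sub_eq_zero, one_apply]
  split_ifs <;> simp [hcard]

theorem sum_count_sub_mul_addChar [DecidableEq Γ] (m : Multiset Γ) (χ : AddChar Γ ℂ) (g : Γ) :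
    ∑ k, (m.count (k - g) : ℂ) * χ k = χ g * (m.map χ).sum := by
  rw [← Equiv.sum_comp (Equiv.addLeft g), Multiset.sum_map_eq_sum_count_smul, Finset.mul_sum]
  refine Finset.sum_congr rfl fun t _ => ?_
  simp only [Equiv.coe_addLeft, add_sub_cancel_left, AddChar.map_add_eq_mul, nsmul_eq_mul]
  ring

end Characters

section VoltageLift

def voltageLift {Γ V : Type*} [AddCommGroup Γ] [DecidableEq Γ] (N : V × V → Multiset Γ) :
    Matrix (V × Γ) (V × Γ) ℂ :=
  of fun p q => ((N (p.1, q.1)).count (q.2 - p.2) : ℂ)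

def voltageMatrix {Γ V : Type*} [AddCommGroup Γ] (N : V × V → Multiset Γ) (χ : AddChar Γ ℂ) :
    Matrix V V ℂ :=
  of fun u v => ((N (u, v)).map χ).sum

variable {Γ V : Type*} [AddCommGroup Γ] [Fintype Γ] [DecidableEq Γ] [Fintype V] [DecidableEq V]

theorem voltageLift_mul_kronecker_characterTable (N : V × V → Multiset Γ) :
    voltageLift N * ((1 : Matrix V V ℂ) ⊗ₖ characterTable Γ) =
      ((1 : Matrix V V ℂ) ⊗ₖ characterTable Γ) * blockDiagonal (voltageMatrix N) := by
  ext ⟨u, g⟩ ⟨v, χ⟩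
  simp only [mul_apply, Fintype.sum_prod_type, kroneckerMap_apply, one_apply, ite_mul, mul_ite,
    one_mul, zero_mul, mul_zero, Finset.sum_ite_irrel, Finset.sum_const_zero,
    Finset.sum_ite_eq, Finset.sum_ite_eq', Finset.mem_univ, if_true, blockDiagonal_apply,
    voltageLift, voltageMatrix, characterTable, of_apply]
  exact sum_count_sub_mul_addChar _ χ g

theorem charpoly_voltageLift (N : V × V → Multiset Γ) :
    (voltageLift N).charpoly = ∏ χ, (voltageMatrix N χ).charpoly := by
  have hinv : ((1 : Matrix V V ℂ) ⊗ₖ characterTable Γ) *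
      ((1 : Matrix V V ℂ) ⊗ₖ characterTableInv Γ) = 1 := by
    rw [← mul_kronecker_mul, Matrix.one_mul, characterTable_mul_characterTableInv,
      one_kronecker_one]
  rw [charpoly_eq_of_mul_eq_mul (by simp) hinv (voltageLift_mul_kronecker_characterTable N),
    charpoly_blockDiagonal]

end VoltageLift

theorem stmt_12_general {Γ V : Type*} [AddCommGroup Γ] [Fintype Γ] [DecidableEq Γ]
    [Fintype V] [DecidableEq V]
    (N : V × V → Multiset Γ)
    -- A : adjacency matrix of the lift
    (A : Matrix (V × Γ) (V × Γ) ℂ)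
    (hA : ∀ p q : V × Γ, A p q = ((N (p.1, q.1)).count (q.2 - p.2) : ℕ))
    -- B χ : the polynomial matrix evaluated at the character χ
    (B : AddChar Γ ℂ → Matrix V V ℂ)
    (hB : ∀ (χ : AddChar Γ ℂ) (u v : V), B χ u v = ((N (u, v)).map (fun t => χ t)).sum) :
    -- the characteristic polynomial of the lift factors through the characters
    A.charpoly = ∏ χ : AddChar Γ ℂ, (B χ).charpoly ∧
    -- consequently, the spectrum of the lift is the multiset union of the spectra of the B χ
    A.charpoly.roots = ∑ χ : AddChar Γ ℂ, (B χ).charpoly.roots := by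
  obtain rfl : A = voltageLift N := ext hA
  obtain rfl : B = voltageMatrix N := funext fun χ => ext (hB χ)
  have hcharpoly := charpoly_voltageLift N
  exact ⟨hcharpoly, by rw [hcharpoly, roots_prod_of_monic _ _ fun χ _ => charpoly_monic _]⟩

theorem stmt_12 {Γ V : Type*} [AddCommGroup Γ] [Fintype Γ] [DecidableEq Γ]
    [Fintype V] [DecidableEq V]
    (N : V × V → Multiset Γ)
    (hsym : ∀ u v : V, N (v, u) = (N (u, v)).map (fun t => -t))
    -- A : adjacency matrix of the lift
    (A : Matrix (V × Γ) (V × Γ) ℂ)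
    (hA : ∀ p q : V × Γ, A p q = ((N (p.1, q.1)).count (q.2 - p.2) : ℕ))
    -- B χ : the polynomial matrix evaluated at the character χ
    (B : AddChar Γ ℂ → Matrix V V ℂ)
    (hB : ∀ (χ : AddChar Γ ℂ) (u v : V), B χ u v = ((N (u, v)).map (fun t => χ t)).sum) :
    -- the characteristic polynomial of the lift factors through the characters
    A.charpoly = ∏ χ : AddChar Γ ℂ, (B χ).charpoly ∧
    -- consequently, the spectrum of the lift is the multiset union of the spectra of the B χ
    A.charpoly.roots = ∑ χ : AddChar Γ ℂ, (B χ).charpoly.roots :=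
  stmt_12_general N A hA B hB
end
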